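/- arXiv:0909.0799 — 2 statements merged into one kernel-verified Lean document; each statement's English description precedes it below -/
import Mathlib

section
/- Let D be a Dedekind domain and H a congruence subgroup of SL₂(D) with level l(H) = 𝔮. Let α ∈ D be invertible modulo 𝔮, i.e. the image of α in D/𝔮 is a unit. Then α²·ql(H) ⊆ ql(H), where ql(H) is the quasi-level of H. -/
open Matrix

/-- The translation matrix `T(r) = [[1, r], [0, 1]]` in `SL₂(R)`. -/
def Tm (R : Type*) [CommRing R] (r : R) : Matrix.SpecialLinearGroup (Fin 2) R :=
  ⟨!![1, r; 0, 1], by simp [Matrix.det_fin_two_of]⟩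

/-- The principal congruence subgroup `SL₂(R, 𝔮)`, the kernel of reduction mod `𝔮`. -/
def SLmod (R : Type*) [CommRing R] (q : Ideal R) :
    Subgroup (Matrix.SpecialLinearGroup (Fin 2) R) :=
  (Matrix.SpecialLinearGroup.map (Ideal.Quotient.mk q)).ker

/-- `H` is a congruence subgroup: it contains a principal congruence subgroup of
nonzero level. -/
def IsCongruence {R : Type*} [CommRing R]
    (H : Subgroup (Matrix.SpecialLinearGroup (Fin 2) R)) : Prop :=
  ∃ q : Ideal R, q ≠ ⊥ ∧ SLmod R q ≤ H

/-- `q` is the level `l(H)` of `H`: the largest ideal all of whose associated translations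
lie in the normal core of `H` (equivalently, the largest ideal contained in the
quasi-level of `H`). -/
def IsLevel {R : Type*} [CommRing R]
    (H : Subgroup (Matrix.SpecialLinearGroup (Fin 2) R)) (q : Ideal R) : Prop :=
  (∀ r ∈ q, Tm R r ∈ H.normalCore) ∧
    ∀ I : Ideal R, (∀ r ∈ I, Tm R r ∈ H.normalCore) → I ≤ q

lemma Tm_mul {R : Type*} [CommRing R] (r s : R) : Tm R r * Tm R s = Tm R (r + s) := by
  apply Subtype.ext
  show (!![1, r; 0, 1] : Matrix (Fin 2) (Fin 2) R) * !![1, s; 0, 1] = !![1, r + s; 0, 1]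
  ext i j
  fin_cases i <;> fin_cases j <;> simp [Matrix.mul_apply, Fin.sum_univ_two] <;> ring

lemma Tm_zero {R : Type*} [CommRing R] : Tm R 0 = 1 := by
  apply Subtype.ext
  show (!![1, (0:R); 0, 1] : Matrix (Fin 2) (Fin 2) R) = 1
  ext i j
  fin_cases i <;> fin_cases j <;> simp

lemma Tm_inv {R : Type*} [CommRing R] (r : R) : (Tm R r)⁻¹ = Tm R (-r) := by
  apply inv_eq_of_mul_eq_one_right
  rw [Tm_mul, add_neg_cancel, Tm_zero]

lemma mem_SLmod_of {R : Type*} [CommRing R] (q : Ideal R)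
    (X : Matrix.SpecialLinearGroup (Fin 2) R)
    (h11 : (X : Matrix (Fin 2) (Fin 2) R) 0 0 - 1 ∈ q)
    (h12 : (X : Matrix (Fin 2) (Fin 2) R) 0 1 ∈ q)
    (h21 : (X : Matrix (Fin 2) (Fin 2) R) 1 0 ∈ q)
    (h22 : (X : Matrix (Fin 2) (Fin 2) R) 1 1 - 1 ∈ q) :
    X ∈ SLmod R q := by
  show X ∈ (Matrix.SpecialLinearGroup.map (Ideal.Quotient.mk q)).ker
  rw [MonoidHom.mem_ker]
  apply Matrix.SpecialLinearGroup.ext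
  intro i j
  fin_cases i <;> fin_cases j <;>
    simp only [Matrix.SpecialLinearGroup.map_apply_coe, RingHom.mapMatrix_apply,
      Matrix.map_apply, Matrix.SpecialLinearGroup.coe_one, Matrix.one_apply] <;>
    simp only [Fin.zero_eta, Fin.mk_one, ne_eq, zero_ne_one, one_ne_zero,
      if_true, if_false, reduceIte]
  · rw [← sub_eq_zero, ← map_one (Ideal.Quotient.mk q), ← map_sub,
      Ideal.Quotient.eq_zero_iff_mem]; exact h11
  · rw [Ideal.Quotient.eq_zero_iff_mem]; exact h12
  · rw [Ideal.Quotient.eq_zero_iff_mem]; exact h21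
  · rw [← sub_eq_zero, ← map_one (Ideal.Quotient.mk q), ← map_sub,
      Ideal.Quotient.eq_zero_iff_mem]; exact h22

/-- Lemma 4.2. Let `H` be a congruence subgroup of `SL₂(D)` of level
`q` and let `α ∈ D` be invertible modulo `q`. Then `α² · ql(H) ⊆ ql(H)`, where the
quasi-level `ql(H)` is `{r : T(r) ∈ normal core of H}`. -/
theorem statement10 {D : Type*} [CommRing D] [IsDomain D] [IsDedekindDomain D]
    (H : Subgroup (Matrix.SpecialLinearGroup (Fin 2) D)) (hH : IsCongruence H)
    (q : Ideal D) (hq : IsLevel H q)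
    (α : D) (hα : IsUnit (Ideal.Quotient.mk q α)) :
    ∀ x : D, Tm D x ∈ H.normalCore → Tm D (α ^ 2 * x) ∈ H.normalCore := by
  intro x hx
  obtain ⟨q', hq'ne, hq'H⟩ := hH
  -- the principal congruence subgroup is contained in the normal core
  have hq'core : SLmod D q' ≤ H.normalCore := by
    haveI : (SLmod D q').Normal := (Matrix.SpecialLinearGroup.map (Ideal.Quotient.mk q')).normal_ker
    exact Subgroup.normal_le_normalCore.mpr hq'H
  -- an inverse of α modulo q
  obtain ⟨β, hβ⟩ : ∃ β, α * β - 1 ∈ q := by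
    obtain ⟨u, hu⟩ := hα
    obtain ⟨β, hβ⟩ := Ideal.Quotient.mk_surjective (↑u⁻¹ : D ⧸ q)
    refine ⟨β, ?_⟩
    rw [← Ideal.Quotient.eq_zero_iff_mem, _root_.map_sub, _root_.map_mul, ← hu, hβ, Units.mul_inv]
    simp
  -- the transporter ideal J = (q : x)
  set J : Ideal D := q.colon (Ideal.span {x}) with hJdef
  have hqJ : q ≤ J := fun r hr => Ideal.mem_colon_span_singleton.mpr (Ideal.mul_mem_right x _ hr)
  -- a nonzero element of q'
  obtain ⟨c, hcq', hc0⟩ := Submodule.exists_mem_ne_zero_of_ne_bot hq'ne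
  have hspanc : Ideal.span {c} ≠ (⊥ : Ideal D) := by
    simpa [Ideal.span_singleton_eq_bot] using hc0
  -- finitely many maximal ideals contain c
  have hfin : {m : Ideal D | m ∣ Ideal.span {c}}.Finite := by
    haveI := UniqueFactorizationMonoid.fintypeSubtypeDvd (Ideal.span {c} : Ideal D) hspanc
    rw [← Set.finite_coe_iff]
    exact Finite.of_fintype {m : Ideal D // m ∣ Ideal.span {c}}
  set T : Set (Ideal D) := {m | m.IsMaximal ∧ c ∈ m ∧ ¬ J ≤ m} with hTdef
  have hTfin : T.Finite := by
    refine hfin.subset fun m hm => ?_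
    exact Ideal.dvd_iff_le.mpr ((Ideal.span_singleton_le_iff_mem m).mpr hm.2.1)
  haveI := hTfin.fintype
  -- CRT: find a ≡ α mod J and a ≡ 1 mod every m ∈ T
  set Idl : Option ↥T → Ideal D := fun o => o.elim J (fun m => m.1) with hIdl
  have hpair : Pairwise fun i j : Option ↥T => IsCoprime (Idl i) (Idl j) := by
    have key : ∀ (m : ↥T), IsCoprime J m.1 := by
      rintro ⟨m, hmmax, hcm, hJm⟩
      rw [Ideal.isCoprime_iff_sup_eq]
      have hlt : m < J ⊔ m := by
        rw [right_lt_sup]; exact hJm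
      simpa using hmmax.out.2 _ hlt
    rintro (_ | ⟨m, hm⟩) (_ | ⟨m', hm'⟩) hij
    · exact absurd rfl hij
    · exact key ⟨m', hm'⟩
    · exact (key ⟨m, hm⟩).symm
    · show IsCoprime (m : Ideal D) (m' : Ideal D)
      rw [Ideal.isCoprime_iff_sup_eq]
      refine Ideal.IsMaximal.coprime_of_ne hm.1 hm'.1 ?_
      intro h
      exact hij (by simp [h])
  obtain ⟨a, ha⟩ := Ideal.exists_forall_sub_mem_ideal hpair (fun o => o.elim α (fun _ => 1))
  have haJ : a - α ∈ J := ha none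
  have haT : ∀ m ∈ T, a - 1 ∈ m := fun m hm => ha (some ⟨m, hm⟩)
  -- a is coprime to c
  obtain ⟨b, d, hdet⟩ : ∃ b d : D, a * d - b * c = 1 := by
    have hsup : Ideal.span {a} ⊔ Ideal.span {c} = ⊤ := by
      by_contra hne
      obtain ⟨m, hmmax, hmle⟩ := Ideal.exists_le_maximal _ hne
      have ham : a ∈ m := hmle (le_sup_left (α := Ideal D) (Ideal.subset_span rfl))
      have hcm : c ∈ m := hmle (le_sup_right (α := Ideal D) (Ideal.subset_span rfl))
      by_cases hJm : J ≤ m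
      · have hαm : α ∈ m := by
          have := m.sub_mem ham (hJm haJ); simpa using this
        have h1 : (1 : D) ∈ m := by
          have h2 : α * β ∈ m := Ideal.mul_mem_right β _ hαm
          have := m.sub_mem h2 (hJm (hqJ hβ)); simpa using this
        exact hmmax.ne_top ((Ideal.eq_top_iff_one m).mpr h1)
      · have h1 : (1 : D) ∈ m := by
          have := m.sub_mem ham (haT m ⟨hmmax, hcm, hJm⟩); simpa using this
        exact hmmax.ne_top ((Ideal.eq_top_iff_one m).mpr h1)
    have h1 : (1 : D) ∈ Ideal.span {a} ⊔ Ideal.span {c} := by rw [hsup]; trivial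
    obtain ⟨u, hu, v, hv, huv⟩ := Submodule.mem_sup.mp h1
    obtain ⟨d, hd⟩ := Ideal.mem_span_singleton'.mp hu
    obtain ⟨e, he⟩ := Ideal.mem_span_singleton'.mp hv
    exact ⟨-e, d, by rw [← hd, ← he] at huv; linear_combination huv⟩
  -- the matrix M = [[a,b],[c,d]]
  set M : Matrix.SpecialLinearGroup (Fin 2) D :=
    ⟨!![a, b; c, d], by rw [Matrix.det_fin_two_of]; exact hdet⟩ with hMdef
  have hGmem : M * Tm D x * M⁻¹ ∈ H.normalCore :=
    (Subgroup.normalCore_normal H).conj_mem _ hx M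
  have hGcoe : ((M * Tm D x * M⁻¹ : Matrix.SpecialLinearGroup (Fin 2) D) :
      Matrix (Fin 2) (Fin 2) D) = !![1 - a*c*x, a^2*x; -(c^2*x), 1 + a*c*x] := by
    rw [Matrix.SpecialLinearGroup.coe_mul, Matrix.SpecialLinearGroup.coe_mul,
      Matrix.SpecialLinearGroup.coe_inv]
    show (!![a, b; c, d] : Matrix (Fin 2) (Fin 2) D) * !![1, x; 0, 1] *
      Matrix.adjugate !![a, b; c, d] = _
    rw [Matrix.adjugate_fin_two]
    ext i j
    fin_cases i <;> fin_cases j <;>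
      simp [Matrix.mul_apply, Fin.sum_univ_two] <;>
      first
        | ring1
        | linear_combination hdet
        | linear_combination x * hdet
        | linear_combination (-x) * hdet
        | linear_combination (1 + x) * hdet
  have hPcoe : ((M * Tm D x * M⁻¹ * Tm D (-(a^2*x)) : Matrix.SpecialLinearGroup (Fin 2) D) :
      Matrix (Fin 2) (Fin 2) D) =
      !![1 - a*c*x, a^3*c*x^2; -(c^2*x), 1 + a*c*x + a^2*c^2*x^2] := by
    rw [Matrix.SpecialLinearGroup.coe_mul, hGcoe]
    show _ * (!![1, -(a^2*x); 0, 1] : Matrix (Fin 2) (Fin 2) D) = _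
    ext i j
    fin_cases i <;> fin_cases j <;>
      simp [Matrix.mul_apply, Fin.sum_univ_two] <;> ring
  have hPmem : M * Tm D x * M⁻¹ * Tm D (-(a^2*x)) ∈ SLmod D q' := by
    apply mem_SLmod_of <;> rw [hPcoe]
    · have e : (!![1 - a*c*x, a^3*c*x^2; -(c^2*x), 1 + a*c*x + a^2*c^2*x^2] :
          Matrix (Fin 2) (Fin 2) D) 0 0 - 1 = c * (-(a*x)) := by
        simp; ring
      rw [e]; exact Ideal.mul_mem_right _ _ hcq'
    · have e : (!![1 - a*c*x, a^3*c*x^2; -(c^2*x), 1 + a*c*x + a^2*c^2*x^2] :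
          Matrix (Fin 2) (Fin 2) D) 0 1 = c * (a^3*x^2) := by
        simp; ring
      rw [e]; exact Ideal.mul_mem_right _ _ hcq'
    · have e : (!![1 - a*c*x, a^3*c*x^2; -(c^2*x), 1 + a*c*x + a^2*c^2*x^2] :
          Matrix (Fin 2) (Fin 2) D) 1 0 = c * (-(c*x)) := by
        simp; ring
      rw [e]; exact Ideal.mul_mem_right _ _ hcq'
    · have e : (!![1 - a*c*x, a^3*c*x^2; -(c^2*x), 1 + a*c*x + a^2*c^2*x^2] :
          Matrix (Fin 2) (Fin 2) D) 1 1 - 1 = c * (a*x + a^2*c*x^2) := by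
        simp; ring
      rw [e]; exact Ideal.mul_mem_right _ _ hcq'
  -- hence T(a²x) lies in the normal core
  have hTa : Tm D (a^2*x) ∈ H.normalCore := by
    have h1 : Tm D (-(a^2*x)) ∈ H.normalCore := by
      have h2 := H.normalCore.mul_mem (H.normalCore.inv_mem hGmem) (hq'core hPmem)
      rwa [inv_mul_cancel_left] at h2
    have h3 := H.normalCore.inv_mem h1
    rwa [Tm_inv, neg_neg] at h3
  -- the correction term lies in q, hence in the normal core
  have hdiff : Tm D ((α^2 - a^2) * x) ∈ H.normalCore := by
    apply hq.1
    have h1 : (a - α) * x ∈ q := Ideal.mem_colon_span_singleton.mp haJ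
    have e : (α^2 - a^2) * x = (-(α + a)) * ((a - α) * x) := by ring
    rw [e]; exact Ideal.mul_mem_left _ _ h1
  have e : α^2 * x = (α^2 - a^2) * x + a^2 * x := by ring
  rw [e, ← Tm_mul]
  exact H.normalCore.mul_mem hdiff hTa
end

section
/- Let D be a Dedekind domain and H a congruence subgroup of SL₂(D) with level l(H) = 𝔮₁·𝔮₂, where 𝔮₁ + 𝔮₂ = D. Then the subgroup K = (H ∩ SL₂(D,𝔮₁))·SL₂(D,𝔮₂) of SL₂(D) has level l(K) = 𝔮₂. -/
open Matrix

/-!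
The inclusion `q₂ ⊆ l(K)` holds because `SL₂(D, q₂)` is a normal subgroup of `K`. Conversely,
write `1 = a + b` with `a ∈ q₁`, `b ∈ q₂`. If `T(r)` lies in the normal core of `K`, every
conjugate of `T(ar)` lies in `K ∩ SL₂(D, q₁)`, so it is a product `h z` with `h ∈ H` and
`z ∈ SL₂(D, q₁) ∩ SL₂(D, q₂) = SL₂(D, q₁q₂)`. Once `SL₂(D, q₁q₂) ≤ H` this puts `T(ar)` in the
normal core of `H`, so `ar ∈ q₁q₂` and `r = ar + br ∈ q₂`.

That `SL₂(D, q₁q₂) ≤ N_H` comes from a general fact: a normal subgroup `N` containing every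
`T(t)`, `t ∈ q`, and some `SL₂(D, 𝔞)` with `𝔞 ≠ 0`, contains `SL₂(D, q)`. For `M ∈ SL₂(D, q)`,
the Chinese remainder theorem over the finitely many maximal ideals above `𝔞` gives `x ∈ q`
making the corner entry `u` of `T(x) M` a unit mod `𝔞`. Row and column operations from `N`
reduce `T(x) M` to `diag(u, u⁻¹)` mod `𝔞`, and Whitehead's lemma writes `diag(u, u⁻¹)` as a
product of conjugates of elementary matrices of level `q`.
-/

lemma Subgroup.mem_of_mem_inf_sup {G : Type*} [Group G] {H A B : Subgroup G} [B.Normal]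
    (hAB : A ⊓ B ≤ H) {g : G} (hg : g ∈ H ⊓ A ⊔ B) (hgA : g ∈ A) : g ∈ H := by
  rw [← SetLike.mem_coe, Subgroup.mul_normal] at hg
  obtain ⟨h, hh, b, hb, rfl⟩ := hg
  have hbA : b ∈ A := by simpa using A.mul_mem (A.inv_mem hh.2) hgA
  exact H.mul_mem hh.1 (hAB ⟨hbA, hb⟩)

lemma Subgroup.mem_normalCore_of_mem_normalCore_inf_sup {G : Type*} [Group G]
    {H A B : Subgroup G} [hA : A.Normal] [B.Normal] (hAB : A ⊓ B ≤ H) {g : G}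
    (hg : g ∈ (H ⊓ A ⊔ B).normalCore) (hgA : g ∈ A) : g ∈ H.normalCore := fun x =>
  Subgroup.mem_of_mem_inf_sup hAB (hg x) (hA.conj_mem g hgA x)

section SL2

variable {R S : Type*} [CommRing R] [CommRing S]

def Lm (R : Type*) [CommRing R] (r : R) : SpecialLinearGroup (Fin 2) R :=
  ⟨!![1, 0; r, 1], by simp [det_fin_two_of]⟩

@[simp] lemma coe_Tm (r : R) : (Tm R r : Matrix (Fin 2) (Fin 2) R) = !![1, r; 0, 1] := rfl

@[simp] lemma coe_Lm (r : R) : (Lm R r : Matrix (Fin 2) (Fin 2) R) = !![1, 0; r, 1] := rfl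

lemma map_Tm (f : R →+* S) (r : R) : Matrix.SpecialLinearGroup.map f (Tm R r) = Tm S (f r) := by
  ext i j; fin_cases i <;> fin_cases j <;> simp

lemma map_Lm (f : R →+* S) (r : R) : Matrix.SpecialLinearGroup.map f (Lm R r) = Lm S (f r) := by
  ext i j; fin_cases i <;> fin_cases j <;> simp

def Wm (R : Type*) [CommRing R] : SpecialLinearGroup (Fin 2) R :=
  ⟨!![0, -1; 1, 0], by simp [det_fin_two_of]⟩

@[simp] lemma coe_Wm : (Wm R : Matrix (Fin 2) (Fin 2) R) = !![0, -1; 1, 0] := rfl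

lemma Lm_mem_of_Tm_mem {N : Subgroup (SpecialLinearGroup (Fin 2) R)} [hN : N.Normal] {s : R}
    (h : Tm R (-s) ∈ N) : Lm R s ∈ N := by
  have hconj : Lm R s = Wm R * Tm R (-s) * (Wm R)⁻¹ := by
    ext : 1
    simp [Matrix.SpecialLinearGroup.coe_mul, Matrix.SpecialLinearGroup.coe_inv,
      adjugate_fin_two_of]
  exact hconj ▸ hN.conj_mem _ h _

lemma det_fin_two_eq_one (M : SpecialLinearGroup (Fin 2) R) :
    M 0 0 * M 1 1 - M 0 1 * M 1 0 = 1 := by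
  rw [← det_fin_two]; exact M.det_coe

lemma coe_Lm_mul_mul_Tm (M : SpecialLinearGroup (Fin 2) R) {v : R} (hv : M 0 0 * v = 1) :
    ((Lm R (-(v * M 1 0)) * M * Tm R (-(v * M 0 1)) : SpecialLinearGroup (Fin 2) R) :
      Matrix (Fin 2) (Fin 2) R) = !![M 0 0, 0; 0, v] := by
  have hdet := det_fin_two_eq_one M
  rw [Matrix.SpecialLinearGroup.coe_mul, Matrix.SpecialLinearGroup.coe_mul,
    eta_fin_two (M : Matrix (Fin 2) (Fin 2) R)]
  ext i j
  fin_cases i <;> fin_cases j <;> simp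
  · linear_combination (-M 0 1) * hv
  · linear_combination (-M 1 0) * hv
  · linear_combination (v * M 0 1 * M 1 0 - M 1 1) * hv + v * hdet

def whitehead (u v : R) : SpecialLinearGroup (Fin 2) R :=
  Tm R (u - 1) * (Tm R 1 * Lm R ((u - 1) * v) * (Tm R 1)⁻¹) *
    (Tm R 1 * Lm R (-1) * Tm R (u - 1) * (Tm R 1 * Lm R (-1))⁻¹)

lemma coe_whitehead {u v : R} (h : u * v = 1) :
    (whitehead u v : Matrix (Fin 2) (Fin 2) R) = !![u, 0; 0, v] := by
  simp only [whitehead, Matrix.SpecialLinearGroup.coe_mul, Matrix.SpecialLinearGroup.coe_inv,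
    coe_Tm, coe_Lm, adjugate_fin_two_of, mul_fin_two]
  ext i j
  fin_cases i <;> fin_cases j <;> simp
  · linear_combination (u - 1) * u * h
  · linear_combination (1 - u) * h
  · linear_combination (u - 1) * h
  · linear_combination -h

lemma map_whitehead (f : R →+* S) (u v : R) :
    Matrix.SpecialLinearGroup.map f (whitehead u v) = whitehead (f u) (f v) := by
  simp [whitehead, map_Tm, map_Lm]

lemma whitehead_mem {N : Subgroup (SpecialLinearGroup (Fin 2) R)} [hN : N.Normal] {q : Ideal R}
    (hT : ∀ t ∈ q, Tm R t ∈ N) {u : R} (hu : u - 1 ∈ q) (v : R) : whitehead u v ∈ N := by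
  have hL : Lm R ((u - 1) * v) ∈ N := Lm_mem_of_Tm_mem (hT _ (q.neg_mem (q.mul_mem_right v hu)))
  exact mul_mem (mul_mem (hT _ hu) (hN.conj_mem _ hL _)) (hN.conj_mem _ (hT _ hu) _)

end SL2

section Congruence

variable {R : Type*} [CommRing R]

instance (q : Ideal R) : (SLmod R q).Normal := MonoidHom.normal_ker _

lemma mem_SLmod_iff {q : Ideal R} {X : SpecialLinearGroup (Fin 2) R} :
    X ∈ SLmod R q ↔ ∀ i j, X i j - (1 : Matrix (Fin 2) (Fin 2) R) i j ∈ q := by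
  rw [SLmod, MonoidHom.mem_ker, Matrix.SpecialLinearGroup.ext_iff]
  refine forall₂_congr fun i j => ?_
  rw [← Ideal.Quotient.eq]
  rcases eq_or_ne i j with rfl | hij
  · simp
  · simp [hij]

lemma Tm_mem_SLmod {q : Ideal R} {r : R} (h : r ∈ q) : Tm R r ∈ SLmod R q := by
  rw [mem_SLmod_iff]
  intro i j
  fin_cases i <;> fin_cases j <;> simp [h]

lemma SLmod_inf (q q' : Ideal R) : SLmod R (q ⊓ q') = SLmod R q ⊓ SLmod R q' := by
  ext X
  simp only [Subgroup.mem_inf, mem_SLmod_iff, Submodule.mem_inf]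
  exact ⟨fun h => ⟨fun i j => (h i j).1, fun i j => (h i j).2⟩, fun h i j => ⟨h.1 i j, h.2 i j⟩⟩

lemma mem_of_map_mk_eq {N : Subgroup (SpecialLinearGroup (Fin 2) R)} {𝔞 : Ideal R}
    (h𝔞 : SLmod R 𝔞 ≤ N) {X Y : SpecialLinearGroup (Fin 2) R} (hX : X ∈ N)
    (e : Matrix.SpecialLinearGroup.map (Ideal.Quotient.mk 𝔞) X =
      Matrix.SpecialLinearGroup.map (Ideal.Quotient.mk 𝔞) Y) : Y ∈ N := by
  have : X⁻¹ * Y ∈ SLmod R 𝔞 := by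
    rw [SLmod, MonoidHom.mem_ker, map_mul, map_inv, e, inv_mul_cancel]
  simpa using mul_mem hX (h𝔞 this)

lemma mem_of_mem_SLmod_of_isUnit {N : Subgroup (SpecialLinearGroup (Fin 2) R)} [N.Normal]
    {q 𝔞 : Ideal R} (hT : ∀ t ∈ q, Tm R t ∈ N) (h𝔞 : SLmod R 𝔞 ≤ N)
    {M : SpecialLinearGroup (Fin 2) R} (hM : M ∈ SLmod R q)
    (hunit : IsUnit (Ideal.Quotient.mk 𝔞 (M 0 0))) : M ∈ N := by
  obtain ⟨v, hv⟩ : ∃ v, Ideal.Quotient.mk 𝔞 (M 0 0) * Ideal.Quotient.mk 𝔞 v = 1 := by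
    obtain ⟨w, hw⟩ := hunit.exists_right_inv
    obtain ⟨v, rfl⟩ := Ideal.Quotient.mk_surjective w
    exact ⟨v, hw⟩
  have hM00 : M 0 0 - 1 ∈ q := by simpa using mem_SLmod_iff.mp hM 0 0
  have hM01 : M 0 1 ∈ q := by simpa using mem_SLmod_iff.mp hM 0 1
  have hM10 : M 1 0 ∈ q := by simpa using mem_SLmod_iff.mp hM 1 0
  have hL : Lm R (-(v * M 1 0)) ∈ N :=
    Lm_mem_of_Tm_mem (by simpa using hT _ (q.mul_mem_left v hM10))
  have hT' : Tm R (-(v * M 0 1)) ∈ N := hT _ (q.neg_mem (q.mul_mem_left v hM01))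
  have hdiag : Lm R (-(v * M 1 0)) * M * Tm R (-(v * M 0 1)) ∈ N := by
    -- modulo `𝔞` both sides are `diag(M 0 0, v)`
    refine mem_of_map_mk_eq h𝔞 (whitehead_mem hT hM00 v) ?_
    have := coe_Lm_mul_mul_Tm (Matrix.SpecialLinearGroup.map (Ideal.Quotient.mk 𝔞) M)
      (v := Ideal.Quotient.mk 𝔞 v) (by simpa using hv)
    simp only [SpecialLinearGroup.map_apply_coe, RingHom.mapMatrix_apply, map_apply] at this
    apply Subtype.ext
    simp only [map_whitehead, coe_whitehead hv, map_mul, map_neg, map_Tm, map_Lm]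
    exact this.symm
  exact (Subgroup.mul_mem_cancel_left N hL).mp ((Subgroup.mul_mem_cancel_right N hT').mp hdiag)

end Congruence

lemma exists_mem_forall_sub_one_mem_or_mem {R : Type*} [CommRing R] {q : Ideal R} {a : R}
    (ha : a - 1 ∈ q) (S : Finset (Ideal R)) (hS : ∀ m ∈ S, m.IsMaximal) :
    ∃ x ∈ q, ∀ m ∈ S, (a ∈ m → x - 1 ∈ m) ∧ (a ∉ m → x ∈ m) := by
  classical
  have hcop : IsCoprime (q * ∏ m ∈ S with a ∉ m, m) (∏ m ∈ S with a ∈ m, m) := by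
    refine IsCoprime.mul_left (IsCoprime.prod_right fun m hm => ?_)
      (IsCoprime.prod_left fun m hm => IsCoprime.prod_right fun m' hm' => ?_)
    · rw [Finset.mem_filter] at hm
      rw [Ideal.isCoprime_iff_exists]
      exact ⟨1 - a, by simpa using q.neg_mem ha, a, hm.2, by ring⟩
    · rw [Finset.mem_filter] at hm hm'
      rw [Ideal.isCoprime_iff_sup_eq]
      exact (hS m hm.1).coprime_of_ne (hS m' hm'.1) fun h => hm.2 (h ▸ hm'.2)
  obtain ⟨x, hx, y, hy, hxy⟩ := Ideal.isCoprime_iff_exists.mp hcop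
  refine ⟨x, Ideal.mul_le_left hx, fun m hm => ⟨fun ham => ?_, fun ham => ?_⟩⟩
  · have hym : y ∈ m := Ideal.le_of_dvd (Finset.dvd_prod_of_mem (fun m => m)
      (Finset.mem_filter.mpr ⟨hm, ham⟩)) hy
    rw [show x - 1 = -y by linear_combination hxy]
    exact m.neg_mem hym
  · exact Ideal.le_of_dvd (Finset.dvd_prod_of_mem (fun m => m)
      (Finset.mem_filter.mpr ⟨hm, ham⟩)) (Ideal.mul_le_right hx)

section Dedekind

variable {D : Type*} [CommRing D] [IsDedekindDomain D]

lemma finite_setOf_isMaximal_le {J : Ideal D} (hJ : J ≠ ⊥) :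
    {m : Ideal D | m.IsMaximal ∧ J ≤ m}.Finite := by
  have := UniqueFactorizationMonoid.fintypeSubtypeDvd J hJ
  exact (Set.finite_coe_iff.mp (Finite.of_fintype {m // m ∣ J})).subset
    fun m hm => Ideal.dvd_iff_le.mpr hm.2

lemma exists_isUnit_mk_add_mul {J q : Ideal D} (hJ : J ≠ ⊥) {a c : D} (ha : a - 1 ∈ q)
    (hac : IsCoprime a c) : ∃ x ∈ q, IsUnit (Ideal.Quotient.mk J (a + x * c)) := by
  obtain ⟨x, hxq, hx⟩ := exists_mem_forall_sub_one_mem_or_mem ha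
    (finite_setOf_isMaximal_le hJ).toFinset fun m hm => ((Set.Finite.mem_toFinset _).mp hm).1
  refine ⟨x, hxq, of_not_not fun hunit => ?_⟩
  obtain ⟨m', hm', hmem⟩ := exists_max_ideal_of_mem_nonunits hunit
  set m := m'.comap (Ideal.Quotient.mk J)
  have hm : m.IsMaximal := Ideal.comap_isMaximal_of_surjective _ Ideal.Quotient.mk_surjective
  have hJm : J ≤ m := fun r hr => by simp [m, Ideal.Quotient.eq_zero_iff_mem.mpr hr]
  have hxcm : a + x * c ∈ m := hmem
  obtain ⟨hin, hout⟩ := hx m ((Set.Finite.mem_toFinset _).mpr ⟨hm, hJm⟩)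
  by_cases ham : a ∈ m
  · have hcm : c ∈ m := by
      rw [show c = a + x * c - a - (x - 1) * c by ring]
      exact m.sub_mem (m.sub_mem hxcm ham) (m.mul_mem_right c (hin ham))
    obtain ⟨s, t, hst⟩ := hac
    exact hm.ne_top (m.eq_top_iff_one.mpr
      (hst ▸ m.add_mem (m.mul_mem_left s ham) (m.mul_mem_left t hcm)))
  · exact ham (by simpa using m.sub_mem hxcm (m.mul_mem_right c (hout ham)))

theorem SLmod_le_of_forall_Tm_mem {N : Subgroup (SpecialLinearGroup (Fin 2) D)} [N.Normal]
    {q 𝔞 : Ideal D} (h𝔞 : 𝔞 ≠ ⊥) (hT : ∀ t ∈ q, Tm D t ∈ N) (h𝔞N : SLmod D 𝔞 ≤ N) :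
    SLmod D q ≤ N := by
  intro M hM
  obtain ⟨x, hxq, hunit⟩ := exists_isUnit_mk_add_mul (a := M 0 0) (c := M 1 0) h𝔞
    (by simpa using mem_SLmod_iff.mp hM 0 0)
    ⟨M 1 1, -M 0 1, by linear_combination det_fin_two_eq_one M⟩
  refine (Subgroup.mul_mem_cancel_left N (hT x hxq)).mp
    (mem_of_mem_SLmod_of_isUnit hT h𝔞N (mul_mem (Tm_mem_SLmod hxq) hM) ?_)
  simpa [Matrix.SpecialLinearGroup.coe_mul, mul_apply, Fin.sum_univ_two] using hunit

end Dedekind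

theorem statement11_general {D : Type*} [CommRing D] [IsDedekindDomain D]
    (H : Subgroup (Matrix.SpecialLinearGroup (Fin 2) D)) (hH : IsCongruence H)
    (q₁ q₂ : Ideal D) (hlevel : IsLevel H (q₁ * q₂)) (hco : q₁ ⊔ q₂ = ⊤) :
    IsLevel ((H ⊓ SLmod D q₁) ⊔ SLmod D q₂) q₂ := by
  obtain ⟨𝔞, h𝔞, h𝔞H⟩ := hH
  have hcore : SLmod D (q₁ * q₂) ≤ H.normalCore :=
    SLmod_le_of_forall_Tm_mem h𝔞 hlevel.1 (Subgroup.normal_le_normalCore.mpr h𝔞H)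
  have hinf : SLmod D q₁ ⊓ SLmod D q₂ ≤ H := by
    rw [← SLmod_inf, ← Ideal.mul_eq_inf_of_coprime hco]
    exact hcore.trans H.normalCore_le
  refine ⟨fun r hr => Subgroup.normal_le_normalCore.mpr le_sup_right (Tm_mem_SLmod hr),
    fun I hI => ?_⟩
  obtain ⟨a, ha, b, hb, hab⟩ := Submodule.mem_sup.mp (hco ▸ Submodule.mem_top : (1 : D) ∈ q₁ ⊔ q₂)
  have haI : Ideal.span {a} * I ≤ q₁ * q₂ := by
    refine hlevel.2 _ fun t ht => ?_
    obtain ⟨r, hr, rfl⟩ := Ideal.mem_span_singleton_mul.mp ht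
    exact Subgroup.mem_normalCore_of_mem_normalCore_inf_sup hinf (hI _ (I.mul_mem_left a hr))
      (Tm_mem_SLmod (q₁.mul_mem_right r ha))
  intro r hr
  have har : a * r ∈ q₂ :=
    Ideal.mul_le_right (haI (Ideal.mul_mem_mul (Ideal.mem_span_singleton_self a) hr))
  rw [show r = a * r + b * r by linear_combination (-r) * hab]
  exact q₂.add_mem har (q₂.mul_mem_right r hb)

/-- Lemma 4.3. Let `H` be a congruence subgroup of `SL₂(D)` of level
`q₁·q₂` with `q₁ + q₂ = D`. Then the subgroup `(H ∩ SL₂(D,q₁)) · SL₂(D,q₂)` has level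
`q₂`. -/
theorem statement11 {D : Type*} [CommRing D] [IsDomain D] [IsDedekindDomain D]
    (H : Subgroup (Matrix.SpecialLinearGroup (Fin 2) D)) (hH : IsCongruence H)
    (q₁ q₂ : Ideal D) (hlevel : IsLevel H (q₁ * q₂)) (hco : q₁ ⊔ q₂ = ⊤) :
    IsLevel ((H ⊓ SLmod D q₁) ⊔ SLmod D q₂) q₂ :=
  statement11_general H hH q₁ q₂ hlevel hco
end
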